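/- arXiv:1512.05306 — 2 statements merged into one kernel-verified Lean document; each statement's English description precedes it below -/
import Mathlib

section
/- For two distinct positive integers ID and ID' with |b(ID)| ≥ |b(ID')|, and for any phase j ≥ j̄ := ⌈log₂(|b(ID)| + 3)⌉, the direction strings d(ID, j) and d(ID', j) agree at the last position and disagree at some position; i.e., there exist indices x, y < 2^j with (d(ID,j))_x ≠ (d(ID',j))_x and (d(ID,j))_y = (d(ID',j))_y. -/
/-- `Dup S k` repeats each character of the binary string `S` exactly `k` consecutive times. -/
def Dup (S : List Bool) (k : ℕ) : List Bool := S.flatMap (List.replicate k)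

/-- `bRep x` is the minimal (no leading zeros) big-endian binary representation of `x`. -/
def bRep (x : ℕ) : List Bool := (Nat.bits x).reverse

/-- `SID x = 10 ∘ b(x) ∘ 0`. -/
def SID (x : ℕ) : List Bool := [true, false] ++ bRep x ++ [false]

/-- `jbar ID` is the minimal `j` with `2^j ≥ |S(ID)| = |b(ID)| + 3`. -/
def jbar (ID : ℕ) : ℕ := Nat.clog 2 (SID ID).length

/-- `pad` of `S(ID)`: prepend zeros to reach length exactly `2^(jbar ID)`. -/
def padS (ID : ℕ) : List Bool :=
  List.replicate (2 ^ jbar ID - (SID ID).length) false ++ SID ID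

/-- The direction string for phase `j`: `d(ID, j) = Dup(pad(S(ID)), 2^(j - jbar ID))`,
a binary string of length `2^j`. -/
def dirString (ID j : ℕ) : List Bool := Dup (padS ID) (2 ^ (j - jbar ID))

/-! Both direction strings end with the final `0` of `S(·)`. With `t = j̄(ID) - j̄(ID')`, equal
direction strings would give `pad(S(ID)) = Dup(pad(S(ID')), 2^t)`. For `t = 0` the padded strings,
hence the IDs, coincide; for `t ≥ 1` this is impossible, since `S(ID)` starts with `101` (as `b(ID)`
starts with `1`) while no letter of a string with every letter doubled is isolated. -/

open List

lemma Dup_cons (a : Bool) (S : List Bool) (k : ℕ) :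
    Dup (a :: S) k = replicate k a ++ Dup S k := rfl

lemma length_Dup (S : List Bool) (k : ℕ) : (Dup S k).length = S.length * k := by
  simp [Dup, Nat.mul_comm]

lemma getElem?_Dup {k : ℕ} (hk : 0 < k) (S : List Bool) (i : ℕ) :
    (Dup S k)[i]? = S[i / k]? := by
  induction S generalizing i with
  | nil => simp [Dup]
  | cons a S ih =>
    rw [Dup_cons]
    by_cases h : i < k
    · simp [getElem?_append_left, h, Nat.div_eq_of_lt h]
    · rw [getElem?_append_right (by simpa using h), length_replicate, ih,
        (Nat.div_eq_sub_div hk (not_lt.mp h) : i / k = _), getElem?_cons_succ]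

lemma Dup_one (S : List Bool) : Dup S 1 = S :=
  flatMap_singleton' S

lemma Dup_Dup (S : List Bool) (a b : ℕ) : Dup (Dup S a) b = Dup S (a * b) := by
  simp [Dup, flatMap_assoc, flatMap_replicate]

lemma Dup_injective {k : ℕ} (hk : 0 < k) : Function.Injective (Dup · k) := by
  intro S T h
  ext i : 1
  simpa [getElem?_Dup hk, Nat.mul_div_cancel _ hk] using congrArg (·[i * k]?) h

lemma getLast?_Dup {k : ℕ} (hk : 0 < k) (S : List Bool) : (Dup S k).getLast? = S.getLast? := by
  rw [Dup, getLast?_flatMap, ← head?_reverse]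
  cases S.reverse <;> simp [getLast?_replicate, hk.ne']

lemma Nat.div_eq_succ_div_or_succ_div_eq {k : ℕ} (hk : 2 ≤ k) (m : ℕ) :
    m / k = (m + 1) / k ∨ (m + 1) / k = (m + 2) / k := by
  rw [Nat.succ_div (a := m + 1), Nat.succ_div (a := m)]
  by_cases h : k ∣ m + 1
  · have : ¬ k ∣ m + 1 + 1 := fun h' => by
      have := Nat.le_of_dvd one_pos ((Nat.dvd_add_right h).mp h')
      omega
    simp [h, this]
  · simp [h]

lemma not_infix_Dup {a b : Bool} (hab : a ≠ b) {k : ℕ} (hk : 2 ≤ k) (S : List Bool) :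
    ¬ [a, b, a] <:+: Dup S k := by
  rintro ⟨s, t, h⟩
  have hget : ∀ r < 3, S[(s.length + r) / k]? = [a, b, a][r]? := fun r hr => by
    rw [← getElem?_Dup (by omega), ← h, append_assoc, getElem?_append_right (by omega),
      Nat.add_sub_cancel_left, getElem?_append_left (by simpa)]
  rcases Nat.div_eq_succ_div_or_succ_div_eq hk s.length with hq | hq
  · have := (hget 0 (by omega)).symm.trans (hq ▸ hget 1 (by omega))
    simp_all
  · have := (hget 1 (by omega)).symm.trans (hq ▸ hget 2 (by omega))
    simp_all

lemma List.eq_of_replicate_append_cons_eq {α : Type*} {a b : α} (hab : a ≠ b) {m m' : ℕ}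
    {l l' : List α} (h : replicate m a ++ b :: l = replicate m' a ++ b :: l') : l = l' := by
  induction m generalizing m' with
  | zero => cases m' <;> simp_all [replicate_succ, eq_comm]
  | succ m ih => cases m' <;> simp_all [replicate_succ]

lemma Nat.bits_injective : Function.Injective Nat.bits := fun m n h =>
  Nat.digits_inj_iff.mp (by rw [Nat.digits_two_eq_bits, Nat.digits_two_eq_bits, h])

lemma head?_bRep {x : ℕ} (hx : x ≠ 0) : (bRep x).head? = some true := by
  have hne : x.bits ≠ [] := by
    simpa [Nat.digits_two_eq_bits] using (Nat.digits_ne_nil_iff_ne_zero (b := 2)).mpr hx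
  have h := Nat.getLast_digit_ne_zero 2 hx
  simp only [Nat.digits_two_eq_bits, getLast_map] at h
  rw [bRep, head?_reverse, getLast?_eq_some_getLast hne]
  revert h
  cases x.bits.getLast hne <;> simp

lemma SID_length (x : ℕ) : (SID x).length = (bRep x).length + 3 := by
  simp [SID]

lemma jbar_le_jbar {x y : ℕ} (h : (bRep y).length ≤ (bRep x).length) : jbar y ≤ jbar x :=
  Nat.clog_mono_right _ (by simpa [SID_length] using h)

lemma length_padS (x : ℕ) : (padS x).length = 2 ^ jbar x := by
  have := Nat.le_pow_clog one_lt_two (SID x).length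
  simp only [padS, length_append, length_replicate, jbar] at this ⊢
  omega

lemma padS_injective : Function.Injective padS := by
  intro x y h
  simp only [padS, SID, cons_append] at h
  have := eq_of_replicate_append_cons_eq Bool.false_ne_true h
  simpa [bRep, Nat.bits_injective.eq_iff] using this

lemma infix_padS {x : ℕ} (hx : x ≠ 0) : [true, false, true] <:+: padS x := by
  obtain ⟨t, ht⟩ := List.head?_eq_some_iff.mp (head?_bRep hx)
  refine IsInfix.trans ?_ (suffix_append _ _).isInfix
  exact ⟨[], t ++ [false], by simp [SID, ht]⟩

lemma length_dirString {x j : ℕ} (h : jbar x ≤ j) : (dirString x j).length = 2 ^ j := by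
  rw [dirString, length_Dup, length_padS, ← pow_add, Nat.add_sub_cancel' h]

lemma getD_dirString_last {x j : ℕ} (h : jbar x ≤ j) :
    (dirString x j).getD (2 ^ j - 1) false = false := by
  rw [getD_eq_getElem?_getD, ← length_dirString h, ← getLast?_eq_getElem?, dirString,
    getLast?_Dup (by positivity), padS, SID, ← append_assoc, getLast?_concat]
  rfl

lemma dirString_eq_Dup_Dup {x y j : ℕ} (hxy : jbar y ≤ jbar x) (hj : jbar x ≤ j) :
    dirString y j = Dup (Dup (padS y) (2 ^ (jbar x - jbar y))) (2 ^ (j - jbar x)) := by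
  rw [dirString, Dup_Dup, ← pow_add]
  congr 2
  omega

lemma dirString_ne {x y j : ℕ} (hx : x ≠ 0) (hxy : x ≠ y)
    (hlen : (bRep y).length ≤ (bRep x).length) (hj : jbar x ≤ j) :
    dirString x j ≠ dirString y j := by
  intro h
  rw [dirString, dirString_eq_Dup_Dup (jbar_le_jbar hlen) hj] at h
  have hpad := Dup_injective (by positivity) h
  rcases Nat.eq_zero_or_pos (jbar x - jbar y) with ht | ht
  · rw [ht, pow_zero, Dup_one] at hpad
    exact hxy (padS_injective hpad)
  · exact not_infix_Dup (by decide) (Nat.le_self_pow ht.ne' 2) _ (hpad ▸ infix_padS hx)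

lemma List.exists_getD_ne {α : Type*} {l l' : List α} (h : l ≠ l') (hlen : l.length = l'.length)
    (d : α) : ∃ i < l.length, l.getD i d ≠ l'.getD i d := by
  by_contra! H
  refine h (ext_getElem hlen fun i h₁ h₂ => ?_)
  simpa [getElem?_eq_getElem h₁, getElem?_eq_getElem h₂] using H i h₁

theorem dirString_disagree_agree_general (ID ID' : ℕ) (hID : 1 ≤ ID)
    (hne : ID ≠ ID') (hlen : (bRep ID').length ≤ (bRep ID).length)
    (j : ℕ) (hj : Nat.clog 2 ((bRep ID).length + 3) ≤ j) :
    ∃ x y : ℕ, x < 2 ^ j ∧ y < 2 ^ j ∧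
      (dirString ID j).getD x false ≠ (dirString ID' j).getD x false ∧
      (dirString ID j).getD y false = (dirString ID' j).getD y false := by
  have hjbar : jbar ID ≤ j := by rwa [jbar, SID_length]
  have hjbar' : jbar ID' ≤ j := (jbar_le_jbar hlen).trans hjbar
  obtain ⟨x, hx, hdiff⟩ := List.exists_getD_ne (dirString_ne (by omega) hne hlen hjbar)
    (by rw [length_dirString hjbar, length_dirString hjbar']) false
  refine ⟨x, 2 ^ j - 1, length_dirString hjbar ▸ hx, by simp, hdiff, ?_⟩
  rw [getD_dirString_last hjbar, getD_dirString_last hjbar']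

/-- For distinct positive `ID, ID'` with `|b(ID)| ≥ |b(ID')|` and any phase
`j ≥ ⌈log₂(|b(ID)| + 3)⌉`, the direction strings `d(ID, j)` and `d(ID', j)` disagree at some
position `x < 2^j` and agree at some position `y < 2^j`. -/
theorem dirString_disagree_agree (ID ID' : ℕ) (hID : 1 ≤ ID) (hID' : 1 ≤ ID')
    (hne : ID ≠ ID') (hlen : (bRep ID').length ≤ (bRep ID).length)
    (j : ℕ) (hj : Nat.clog 2 ((bRep ID).length + 3) ≤ j) :
    ∃ x y : ℕ, x < 2 ^ j ∧ y < 2 ^ j ∧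
      (dirString ID j).getD x false ≠ (dirString ID' j).getD x false ∧
      (dirString ID j).getD y false = (dirString ID' j).getD y false :=
  dirString_disagree_agree_general ID ID' hID hne hlen j hj
end

section
/- Two agents moving on an n-node 1-interval connected ring, starting at distinct nodes, can be prevented from ever meeting by an adversary removing one edge per round: there is an adversary strategy (remove the edge about to be crossed by the agent whose crossing would create a meeting, or an appropriate edge) such that the agents never occupy the same node. -/
/-- The edge used when leaving node `v` in direction `d` (`true` = towards `v+1`,
`false` = towards `v-1`); edge `e` joins nodes `e` and `e+1`. -/
def edgeOf {n : ℕ} (v : ZMod n) (d : Bool) : ZMod n := if d then v else v - 1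

/-- One step of an agent at `v` intending move `mv`, given the removed edge. -/
def step {n : ℕ} (removed : Option (ZMod n)) (v : ZMod n) (mv : Option Bool) : ZMod n :=
  match mv with
  | none => v
  | some d => if removed = some (edgeOf v d) then v else if d then v + 1 else v - 1

/-- Joint positions of two deterministic agents after `t` rounds: each agent's intended
move may depend on the round and on both positions; `removed t` is the (at most one) edge
removed by the adversary at round `t`. -/
def runPair {n : ℕ} (p0 q0 : ZMod n)
    (s1 s2 : ℕ → ZMod n → ZMod n → Option Bool)
    (removed : ℕ → Option (ZMod n)) : ℕ → ZMod n × ZMod n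
  | 0 => (p0, q0)
  | t + 1 =>
    let pq := runPair p0 q0 s1 s2 removed t
    (step (removed t) pq.1 (s1 t pq.1 pq.2), step (removed t) pq.2 (s2 t pq.2 pq.1))

lemma move_ne {n : ℕ} (hn : 3 ≤ n) (p : ZMod n) (d : Bool) :
    step (n := n) none p (some d) ≠ p := by
  haveI : Fact (1 < n) := ⟨by omega⟩
  have h1 : (1 : ZMod n) ≠ 0 := one_ne_zero
  cases d
  · intro h
    have h' : p - 1 = p := by simpa [step] using h
    exact h1 (by linear_combination -h')
  · intro h
    have h' : p + 1 = p := by simpa [step] using h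
    exact h1 (by linear_combination h')

lemma block {n : ℕ} (hn : 3 ≤ n) (p q : ZMod n) (hpq : p ≠ q) (m1 m2 : Option Bool) :
    ∃ r : Option (ZMod n), step r p m1 ≠ step r q m2 := by
  haveI : Fact (1 < n) := ⟨by omega⟩
  by_cases h : step (n := n) none p m1 ≠ step none q m2
  · exact ⟨none, h⟩
  push_neg at h
  match m1, m2 with
  | none, none => simp [step] at h; exact absurd h hpq
  | some d1, none =>
    refine ⟨some (edgeOf p d1), ?_⟩
    simpa [step] using hpq
  | none, some d2 =>
    refine ⟨some (edgeOf q d2), ?_⟩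
    simpa [step] using hpq
  | some d1, some d2 =>
    refine ⟨some (edgeOf p d1), ?_⟩
    have hp : step (some (edgeOf p d1)) p (some d1) = p := by simp [step]
    rw [hp]
    by_cases he : edgeOf q d2 = edgeOf p d1
    · have : step (some (edgeOf p d1)) q (some d2) = q := by simp [step, he]
      rw [this]; exact hpq
    · have hne : some (edgeOf p d1) ≠ some (edgeOf q d2) := by
        simpa using fun hh => he hh.symm
      have : step (some (edgeOf p d1)) q (some d2) = step none q (some d2) := by
        simp [step, hne]
      rw [this, ← h]
      exact (move_ne hn p d1).symm

/-- Two agents starting at distinct nodes of an `n`-node 1-interval connected ring can be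
prevented from ever meeting: there is an adversary strategy removing at most one edge per
round such that the agents never occupy the same node. -/
theorem two_agents_never_meet (n : ℕ) (hn : 3 ≤ n) (p0 q0 : ZMod n) (hpq : p0 ≠ q0)
    (s1 s2 : ℕ → ZMod n → ZMod n → Option Bool) :
    ∃ removed : ℕ → Option (ZMod n),
      ∀ t, (runPair p0 q0 s1 s2 removed t).1 ≠ (runPair p0 q0 s1 s2 removed t).2 := by
  classical
  let pick : ℕ → ZMod n × ZMod n → Option (ZMod n) := fun t pq =>
    if h : pq.1 ≠ pq.2 then
      Classical.choose (block hn pq.1 pq.2 h (s1 t pq.1 pq.2) (s2 t pq.2 pq.1))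
    else none
  let pos : ℕ → ZMod n × ZMod n := fun t =>
    Nat.rec (p0, q0)
      (fun t pq => (step (pick t pq) pq.1 (s1 t pq.1 pq.2), step (pick t pq) pq.2 (s2 t pq.2 pq.1))) t
  have key : ∀ t, runPair p0 q0 s1 s2 (fun t => pick t (pos t)) t = pos t ∧
      (pos t).1 ≠ (pos t).2 := by
    intro t
    induction t with
    | zero => exact ⟨rfl, hpq⟩
    | succ t ih =>
      obtain ⟨heq, hne⟩ := ih
      have hpick : pick t (pos t) =
          Classical.choose (block hn (pos t).1 (pos t).2 hne
            (s1 t (pos t).1 (pos t).2) (s2 t (pos t).2 (pos t).1)) := dif_pos hne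
      have hpos : pos (t + 1) =
          (step (pick t (pos t)) (pos t).1 (s1 t (pos t).1 (pos t).2),
           step (pick t (pos t)) (pos t).2 (s2 t (pos t).2 (pos t).1)) := rfl
      constructor
      · rw [runPair, heq, hpos]
      · rw [hpos, hpick]
        exact Classical.choose_spec (block hn (pos t).1 (pos t).2 hne
          (s1 t (pos t).1 (pos t).2) (s2 t (pos t).2 (pos t).1))
  exact ⟨fun t => pick t (pos t), fun t => by rw [(key t).1]; exact (key t).2⟩
end
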